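/- Every language recognized by a TAGED is recognized by some TAG^∧ whose global constraint is a conjunction of atoms of the forms q ≈ q' and q ≉ q'; moreover the inclusion of language classes is strict: over the signature Σ = {a:0, s:1, f:2}, the language of terms f(s^{n1}(a), f(s^{n2}(a), …, f(s^{nk}(a), a)…)) with k ≥ 0 and the natural numbers n1,…,nk pairwise distinct is recognized by such a TAG^∧ but is not recognized by any TAGED. -/

import Mathlib

set_option maxHeartbeats 1000000

namespace TreeAut

/-! ### Ranked terms -/

/-- Ranked terms over a symbol type `F` (arities are imposed by well-formedness). -/
inductive RTerm (F : Type) : Type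
  | node : F → List (RTerm F) → RTerm F

namespace RTerm

def rootLabel {F : Type} : RTerm F → F
  | .node f _ => f

/-- `SubAt t p s` : the subterm of `t` at position `p` is `s`. -/
inductive SubAt {F : Type} : RTerm F → List ℕ → RTerm F → Prop
  | refl (t : RTerm F) : SubAt t [] t
  | step {f : F} {ts : List (RTerm F)} {i : ℕ} {u s : RTerm F} {p : List ℕ} :
      ts[i]? = some u → SubAt u p s → SubAt (RTerm.node f ts) (i :: p) s

/-- `p` is a position of `t`. -/
def IsPos {F : Type} (t : RTerm F) (p : List ℕ) : Prop := ∃ s, SubAt t p s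

/-- `ReplAt t p s t'` : `t'` is the result of replacing in `t` the subterm at `p` by `s`. -/
inductive ReplAt {F : Type} : RTerm F → List ℕ → RTerm F → RTerm F → Prop
  | here (t s : RTerm F) : ReplAt t [] s s
  | step {f : F} {ts : List (RTerm F)} {i : ℕ} {u u' s : RTerm F} {p : List ℕ} :
      ts[i]? = some u → ReplAt u p s u' →
      ReplAt (RTerm.node f ts) (i :: p) s (RTerm.node f (ts.set i u'))

/-- Height of a term: the maximal length of a position. -/
def height {F : Type} : RTerm F → ℕ
  | .node _ [] => 0
  | .node f (t :: ts) => max (height t + 1) (height (RTerm.node f ts))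

/-- Well-formedness of a term with respect to an arity function. -/
inductive WF {F : Type} (ar : F → ℕ) : RTerm F → Prop
  | node {f : F} {ts : List (RTerm F)} :
      ts.length = ar f → (∀ u ∈ ts, WF ar u) → WF ar (RTerm.node f ts)

/-- A constant, i.e. a term reduced to a symbol (of arity 0). -/
def IsConst {F : Type} (t : RTerm F) : Prop := ∃ c : F, t = RTerm.node c []

/-- Relabeling of a term. -/
def map {F G : Type} (g : F → G) : RTerm F → RTerm G
  | .node f ts => RTerm.node (g f) (ts.attach.map (fun u => map g u.1))
decreasing_by
  simp only [RTerm.node.sizeOf_spec]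
  have := List.sizeOf_lt_of_mem u.2
  omega

end RTerm

/-! ### Patterns (terms with variables) and flat equational theories -/

/-- Terms with variables (variables are natural numbers). -/
inductive Pat (F : Type) : Type
  | var : ℕ → Pat F
  | node : F → List (Pat F) → Pat F

namespace Pat

def subst {F : Type} (σ : ℕ → RTerm F) : Pat F → RTerm F
  | .var v => σ v
  | .node f ps => RTerm.node f (ps.attach.map (fun p => subst σ p.1))
decreasing_by
  simp only [Pat.node.sizeOf_spec]
  have := List.sizeOf_lt_of_mem p.2
  omega

def height {F : Type} : Pat F → ℕ
  | .var _ => 0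
  | .node _ [] => 0
  | .node f (p :: ps) => max (height p + 1) (height (Pat.node f ps))

inductive HasVar {F : Type} (v : ℕ) : Pat F → Prop
  | var : HasVar v (Pat.var v)
  | node {f : F} {ps : List (Pat F)} {p : Pat F} :
      p ∈ ps → HasVar v p → HasVar v (Pat.node f ps)

inductive WF {F : Type} (ar : F → ℕ) : Pat F → Prop
  | var (v : ℕ) : WF ar (Pat.var v)
  | node {f : F} {ps : List (Pat F)} :
      ps.length = ar f → (∀ p ∈ ps, WF ar p) → WF ar (Pat.node f ps)

end Pat

/-- A flat equation: both sides well-formed, of the same height which is at most 1,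
and with the same variables. -/
def IsFlatEq {F : Type} (ar : F → ℕ) (e : Pat F × Pat F) : Prop :=
  e.1.WF ar ∧ e.2.WF ar ∧ e.1.height = e.2.height ∧ e.1.height ≤ 1 ∧
  (∀ v : ℕ, Pat.HasVar v e.1 ↔ Pat.HasVar v e.2)

/-- One rewrite step using an equation of `E` (in either direction) at some position. -/
def Rew {F : Type} (E : List (Pat F × Pat F)) (s t : RTerm F) : Prop :=
  ∃ l r : Pat F, ((l, r) ∈ E ∨ (r, l) ∈ E) ∧
    ∃ (σ : ℕ → RTerm F) (p : List ℕ),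
      RTerm.SubAt s p (l.subst σ) ∧ RTerm.ReplAt s p (r.subst σ) t

/-- Equivalence modulo the set of equations `E`. -/
def EqE {F : Type} (E : List (Pat F × Pat F)) : RTerm F → RTerm F → Prop :=
  Relation.ReflTransGen (Rew E)

/-! ### Global constraints -/

/-- Transition rule of a tree automaton with constraints between brothers:
`sym(args) → res` with brother equalities `bcEq` and disequalities `bcNeq`
(1-based indices of children). -/
structure Rule (F Q : Type) where
  sym : F
  args : List Q
  bcEq : List (ℕ × ℕ)
  bcNeq : List (ℕ × ℕ)
  res : Q

/-- Atomic global constraints: `q ≈ q'`, `q ≉ q'`, and linear inequalities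
`Σ c·|q| ≥ a` (type `|.|`) and `Σ c·‖q‖ ≥ a` (type `‖.‖`). -/
inductive GAtom (Q : Type) : Type
  | eq : Q → Q → GAtom Q
  | neq : Q → Q → GAtom Q
  | cnt : List (ℤ × Q) → ℤ → GAtom Q
  | cls : List (ℤ × Q) → ℤ → GAtom Q

/-- Boolean combinations of atomic global constraints. -/
inductive GC (Q : Type) : Type
  | tt : GC Q
  | ff : GC Q
  | atom : GAtom Q → GC Q
  | and : GC Q → GC Q → GC Q
  | or : GC Q → GC Q → GC Q
  | not : GC Q → GC Q

/-- The set of `=E`-equivalence classes of members of a set of terms. -/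
def classesOf {F : Type} (E : List (Pat F × Pat F)) (S : Set (RTerm F)) :
    Set (Set (RTerm F)) :=
  {C | ∃ t ∈ S, C = {u | EqE E t u}}

section Sat

variable {β F Q : Type}

/-- Positions of a (run) tree where the node has state `q`
(`st` extracts the state of a node label). -/
def stPos (st : β → Q) (r : RTerm β) (q : Q) : Set (List ℕ) :=
  {p | ∃ s, RTerm.SubAt r p s ∧ st s.rootLabel = q}

/-- `⟦|q|⟧` : the number of positions with state `q`. -/
noncomputable def stCount (st : β → Q) (r : RTerm β) (q : Q) : ℕ :=
  (stPos st r q).ncard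

/-- Terms occurring below positions with state `q`. -/
def stTerms (st : β → Q) (sy : β → F) (r : RTerm β) (q : Q) : Set (RTerm F) :=
  {t | ∃ p s, RTerm.SubAt r p s ∧ st s.rootLabel = q ∧ s.map sy = t}

/-- `⟦‖q‖⟧` : the number of `=E`-classes of terms at positions with state `q`. -/
noncomputable def clsCount (E : List (Pat F × Pat F)) (st : β → Q) (sy : β → F)
    (r : RTerm β) (q : Q) : ℕ :=
  (classesOf E (stTerms st sy r q)).ncard

/-- Satisfaction of a global atomic constraint by a run tree. -/
def satAtom (E : List (Pat F × Pat F)) (st : β → Q) (sy : β → F) (r : RTerm β) :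
    GAtom Q → Prop
  | .eq q q' => ∀ p p' s s', p ≠ p' → RTerm.SubAt r p s → RTerm.SubAt r p' s' →
      st s.rootLabel = q → st s'.rootLabel = q' → EqE E (s.map sy) (s'.map sy)
  | .neq q q' => ∀ p p' s s', p ≠ p' → RTerm.SubAt r p s → RTerm.SubAt r p' s' →
      st s.rootLabel = q → st s'.rootLabel = q' → ¬ EqE E (s.map sy) (s'.map sy)
  | .cnt l a => a ≤ (l.map (fun cq => cq.1 * (stCount st r cq.2 : ℤ))).sum
  | .cls l a => a ≤ (l.map (fun cq => cq.1 * (clsCount E st sy r cq.2 : ℤ))).sum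

/-- Satisfaction of a global constraint by a run tree. -/
def satGC (E : List (Pat F × Pat F)) (st : β → Q) (sy : β → F) (r : RTerm β) :
    GC Q → Prop
  | .tt => True
  | .ff => False
  | .atom a => satAtom E st sy r a
  | .and c d => satGC E st sy r c ∧ satGC E st sy r d
  | .or c d => satGC E st sy r c ∨ satGC E st sy r d
  | .not c => ¬ satGC E st sy r c

end Sat

/-! ### Tree automata with global and brother constraints modulo a flat theory -/

/-- A run is represented as a tree labeled by the rules applied at each position. -/
abbrev Run (F Q : Type) := RTerm (Rule F Q)

def Run.state {F Q : Type} (r : Run F Q) : Q := (RTerm.rootLabel r).res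
def Run.term {F Q : Type} (r : Run F Q) : RTerm F := r.map Rule.sym

/-- `r` is a structurally correct run using rules of `Δ`, whose local brother
constraints are satisfied modulo `E`. -/
inductive IsRun {F Q : Type} (Δ : List (Rule F Q)) (E : List (Pat F × Pat F)) :
    Run F Q → Prop
  | node {ρ : Rule F Q} {rs : List (Run F Q)} :
      ρ ∈ Δ →
      ρ.args = rs.map Run.state →
      (∀ r ∈ rs, IsRun Δ E r) →
      (∀ i j ri rj, (i, j) ∈ ρ.bcEq → rs[i - 1]? = some ri →
        rs[j - 1]? = some rj → EqE E ri.term rj.term) →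
      (∀ i j ri rj, (i, j) ∈ ρ.bcNeq → rs[i - 1]? = some ri →
        rs[j - 1]? = some rj → ¬ EqE E ri.term rj.term) →
      IsRun Δ E (RTerm.node ρ rs)

/-- Tree automaton with brother constraints and global constraints modulo a flat theory. -/
structure TABG (F Q : Type) where
  arity : F → ℕ
  stQ : Finset Q
  rules : List (Rule F Q)
  final : List Q
  eqs : List (Pat F × Pat F)
  gc : GC Q

def TABG.IsAccRun {F Q : Type} (A : TABG F Q) (r : Run F Q) : Prop :=
  IsRun A.rules A.eqs r ∧ satGC A.eqs Rule.res Rule.sym r A.gc ∧ r.state ∈ A.final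

def TABG.Lang {F Q : Type} (A : TABG F Q) : Set (RTerm F) :=
  {t | ∃ r : Run F Q, A.IsAccRun r ∧ r.term = t}

def Rule.WFr {F Q : Type} (ar : F → ℕ) (S : Finset Q) (ρ : Rule F Q) : Prop :=
  ρ.args.length = ar ρ.sym ∧ ρ.res ∈ S ∧ (∀ q ∈ ρ.args, q ∈ S) ∧
  (∀ ij ∈ ρ.bcEq, 1 ≤ ij.1 ∧ ij.1 ≤ ρ.args.length ∧ 1 ≤ ij.2 ∧ ij.2 ≤ ρ.args.length) ∧
  (∀ ij ∈ ρ.bcNeq, 1 ≤ ij.1 ∧ ij.1 ≤ ρ.args.length ∧ 1 ≤ ij.2 ∧ ij.2 ≤ ρ.args.length)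

/-- Well-formedness of a TABG: the equational theory is flat, the rules respect
the arities and the state set, and final states belong to the state set. -/
def TABG.WF {F Q : Type} (A : TABG F Q) : Prop :=
  (∀ e ∈ A.eqs, IsFlatEq A.arity e) ∧
  (∀ ρ ∈ A.rules, ρ.WFr A.arity A.stQ) ∧
  (∀ q ∈ A.final, q ∈ A.stQ)

/-! ### Classes of constraints -/

def GAtom.IsEqNeq {Q : Type} : GAtom Q → Prop
  | .eq _ _ => True
  | .neq _ _ => True
  | .cnt _ _ => False
  | .cls _ _ => False

/-- All coefficients and the constant have the same sign. -/
def sameSign (l : List ℤ) (a : ℤ) : Prop :=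
  ((∀ c ∈ l, 0 ≤ c) ∧ 0 ≤ a) ∨ ((∀ c ∈ l, c ≤ 0) ∧ a ≤ 0)

/-- eq/neq atoms and *natural* linear inequalities. -/
def GAtom.IsNat {Q : Type} : GAtom Q → Prop
  | .eq _ _ => True
  | .neq _ _ => True
  | .cnt l a => sameSign (l.map Prod.fst) a
  | .cls l a => sameSign (l.map Prod.fst) a

/-- eq/neq atoms and natural linear inequalities over the `|q|` only. -/
def GAtom.IsNatCnt {Q : Type} : GAtom Q → Prop
  | .eq _ _ => True
  | .neq _ _ => True
  | .cnt l a => sameSign (l.map Prod.fst) a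
  | .cls _ _ => False

def GC.AtomsAre {Q : Type} (P : GAtom Q → Prop) : GC Q → Prop
  | .tt => True
  | .ff => True
  | .atom a => P a
  | .and c d => GC.AtomsAre P c ∧ GC.AtomsAre P d
  | .or c d => GC.AtomsAre P c ∧ GC.AtomsAre P d
  | .not c => GC.AtomsAre P c

/-- Positive conjunctive constraint: a conjunction of atoms. -/
def GC.IsConjAtoms {Q : Type} : GC Q → Prop
  | .tt => True
  | .ff => False
  | .atom _ => True
  | .and c d => GC.IsConjAtoms c ∧ GC.IsConjAtoms d
  | .or _ _ => False
  | .not _ => False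

/-- A literal: an atom (with natural arithmetic atoms) or the negation of an
eq/neq atom. -/
def GC.IsLit {Q : Type} : GC Q → Prop
  | .atom a => GAtom.IsNat a
  | .not (.atom (.eq _ _)) => True
  | .not (.atom (.neq _ _)) => True
  | _ => False

def GC.IsConjLit {Q : Type} : GC Q → Prop
  | .and c d => GC.IsConjLit c ∧ GC.IsConjLit d
  | c => GC.IsLit c

def GC.IsDNF {Q : Type} : GC Q → Prop
  | .or c d => GC.IsDNF c ∧ GC.IsDNF d
  | c => GC.IsConjLit c

/-- Normalized constraint: `true`, `false`, or a disjunction of conjunctions of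
literals in which all arithmetic literals are positive. -/
def GC.Normalized {Q : Type} (c : GC Q) : Prop :=
  c = GC.tt ∨ c = GC.ff ∨ GC.IsDNF c

/-- No reflexive disequality constraints (the TAGED restriction). -/
def GC.NoReflNeq {Q : Type} : GC Q → Prop :=
  GC.AtomsAre (fun a => match a with
    | .neq q q' => q ≠ q'
    | _ => True)

def conjList {Q : Type} : List (GC Q) → GC Q
  | [] => GC.tt
  | [c] => c
  | c :: cs => GC.and c (conjList cs)

def disjList {Q : Type} : List (GC Q) → GC Q
  | [] => GC.ff
  | [c] => c
  | c :: cs => GC.or c (disjList cs)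

/-- No local constraints between brothers. -/
def TABG.NoBrother {F Q : Type} (A : TABG F Q) : Prop :=
  ∀ ρ ∈ A.rules, ρ.bcEq = [] ∧ ρ.bcNeq = []

/-- A TAG: empty equational theory and no brother constraints. -/
def TABG.IsTAG {F Q : Type} (A : TABG F Q) : Prop := A.eqs = [] ∧ A.NoBrother

/-- A plain tree automaton: a TAG with trivial global constraint. -/
def TABG.IsTA {F Q : Type} (A : TABG F Q) : Prop := A.IsTAG ∧ A.gc = GC.tt

/-! ### Synonym states -/

section Syn

variable {F Q : Type} [DecidableEq Q]

/-- Possible replacements of a state occurrence: `q̄` may stay or become `q̂`. -/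
def replS (qb qh q : Q) : List Q := if q = qb then [qb, qh] else [q]

/-- Replacement of every occurrence of `|q̄|` (resp. `‖q̄‖`) by `|q̄| + |q̂|`
(resp. `‖q̄‖ + ‖q̂‖`) in a linear expression. -/
def linRepl (qb qh : Q) (l : List (ℤ × Q)) : List (ℤ × Q) :=
  l.flatMap (fun cq => (replS qb qh cq.2).map (fun q' => (cq.1, q')))

/-- Literal transformation on positive atoms. -/
def synAtom (qb qh : Q) : GAtom Q → GC Q
  | .eq q1 q2 => conjList ((replS qb qh q1).flatMap (fun a =>
      (replS qb qh q2).map (fun b => GC.atom (GAtom.eq a b))))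
  | .neq q1 q2 => conjList ((replS qb qh q1).flatMap (fun a =>
      (replS qb qh q2).map (fun b => GC.atom (GAtom.neq a b))))
  | .cnt l a => GC.atom (GAtom.cnt (linRepl qb qh l) a)
  | .cls l a => GC.atom (GAtom.cls (linRepl qb qh l) a)

/-- The literal transformation `Ĉ` of (a normalized) constraint, for `q̄ ↝ q̂`. -/
def GC.synTrans (qb qh : Q) : GC Q → GC Q
  | .tt => .tt
  | .ff => .ff
  | .atom a => synAtom qb qh a
  | .not (.atom (.eq q1 q2)) => disjList ((replS qb qh q1).flatMap (fun a =>
      (replS qb qh q2).map (fun b => GC.not (GC.atom (GAtom.eq a b)))))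
  | .not (.atom (.neq q1 q2)) => disjList ((replS qb qh q1).flatMap (fun a =>
      (replS qb qh q2).map (fun b => GC.not (GC.atom (GAtom.neq a b)))))
  | .not c => GC.not (GC.synTrans qb qh c)
  | .and c d => GC.and (GC.synTrans qb qh c) (GC.synTrans qb qh d)
  | .or c d => GC.or (GC.synTrans qb qh c) (GC.synTrans qb qh d)

/-- All rules obtained from `ρ` by all possible replacements of occurrences of
`q̄` by `q̂`. -/
def Rule.synVars (qb qh : Q) (ρ : Rule F Q) : List (Rule F Q) :=
  (ρ.args.mapM (replS qb qh)).flatMap (fun args' =>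
    (replS qb qh ρ.res).map (fun res' =>
      { sym := ρ.sym, args := args', bcEq := ρ.bcEq, bcNeq := ρ.bcNeq, res := res' }))

/-- `F_{q̄↝q̂}` on the list of final states. -/
def finSyn (qb qh : Q) (l : List Q) : List Q := if qb ∈ l then qh :: l else l

/-- The constraint `‖q‖ = k`. -/
def clsEqC (q : Q) (k : ℤ) : GC Q :=
  GC.and (GC.atom (GAtom.cls [(1, q)] k)) (GC.atom (GAtom.cls [(-1, q)] (-k)))

/-- The automaton `A_{q̄↝q̂}`. -/
def TABG.synonym (A : TABG F Q) (qb qh : Q) : TABG F Q :=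
  { arity := A.arity
    stQ := insert qh A.stQ
    rules := A.rules.flatMap (Rule.synVars qb qh)
    final := finSyn qb qh A.final
    eqs := A.eqs
    gc := GC.and
      (GC.or (GC.and (clsEqC qb 0) (clsEqC qh 0))
             (GC.and (clsEqC qh 1) (GC.atom (GAtom.neq qb qh))))
      (GC.synTrans qb qh A.gc) }

end Syn

/-! ### Removal of the counting constraints `|q|` : the automaton `A_¬ℕ` -/

def GC.cntAtoms {Q : Type} : GC Q → List (List (ℤ × Q) × ℤ)
  | .atom (.cnt l a) => [(l, a)]
  | .and c d => GC.cntAtoms c ++ GC.cntAtoms d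
  | .or c d => GC.cntAtoms c ++ GC.cntAtoms d
  | .not c => GC.cntAtoms c
  | _ => []

def GC.eqAtoms {Q : Type} : GC Q → List (Q × Q)
  | .atom (.eq q q') => [(q, q')]
  | .and c d => GC.eqAtoms c ++ GC.eqAtoms d
  | .or c d => GC.eqAtoms c ++ GC.eqAtoms d
  | .not c => GC.eqAtoms c
  | _ => []

def GC.neqAtoms {Q : Type} : GC Q → List (Q × Q)
  | .atom (.neq q q') => [(q, q')]
  | .and c d => GC.neqAtoms c ++ GC.neqAtoms d
  | .or c d => GC.neqAtoms c ++ GC.neqAtoms d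
  | .not c => GC.neqAtoms c
  | _ => []

/-- `max_A` : one plus the maximal constant occurring in the counting literals. -/
def GC.maxConst {Q : Type} (c : GC Q) : ℕ :=
  1 + ((c.cntAtoms.map (fun la => la.2.natAbs)).foldr max 0)

/-- Truncated sum of two mappings `Q → {0,…,m}`. -/
def msumF {Q : Type} {m : ℕ} (M1 M2 : Q → Fin (m + 1)) : Q → Fin (m + 1) :=
  fun q => ⟨min ((M1 q : ℕ) + (M2 q : ℕ)) m, Nat.lt_succ_of_le (Nat.min_le_right _ _)⟩

/-- The mapping `M_q`. -/
def unitMap {Q : Type} [DecidableEq Q] (m : ℕ) (q : Q) : Q → Fin (m + 1) :=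
  fun q' => if q' = q then ⟨min 1 m, Nat.lt_succ_of_le (Nat.min_le_right _ _)⟩
            else ⟨0, Nat.succ_pos m⟩

/-- Value of a linear expression under a mapping. -/
def lvalF {Q : Type} {m : ℕ} (M : Q → Fin (m + 1)) (l : List (ℤ × Q)) : ℤ :=
  (l.map (fun cq => cq.1 * ((M cq.2 : ℕ) : ℤ))).sum

/-- All variants of a rule, decorated with occurrence-counting mappings. -/
noncomputable def Rule.notNVars {F Q : Type} [Fintype Q] [DecidableEq Q] (m : ℕ) (ρ : Rule F Q) :
    List (Rule F (Q × (Q → Fin (m + 1)))) :=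
  ((ρ.args.mapM (fun q =>
      ((Finset.univ : Finset (Q → Fin (m + 1))).toList).map (fun M => (q, M))))).map
    (fun args' =>
      { sym := ρ.sym, args := args', bcEq := ρ.bcEq, bcNeq := ρ.bcNeq,
        res := (ρ.res, (args'.map Prod.snd).foldr msumF (unitMap m ρ.res)) })

/-- The automaton `A_¬ℕ`. -/
noncomputable def TABG.notN {F Q : Type} [Fintype Q] [DecidableEq Q] (A : TABG F Q) :
    TABG F (Q × (Q → Fin (A.gc.maxConst + 1))) :=
  { arity := A.arity
    stQ := A.stQ ×ˢ (Finset.univ : Finset (Q → Fin (A.gc.maxConst + 1)))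
    rules := A.rules.flatMap (Rule.notNVars A.gc.maxConst)
    final := (A.final.flatMap (fun q =>
        ((Finset.univ : Finset (Q → Fin (A.gc.maxConst + 1))).toList).map
          (fun M => (q, M)))).filter
        (fun qM => decide (∀ la ∈ A.gc.cntAtoms, la.2 ≤ lvalF qM.2 la.1))
    eqs := A.eqs
    gc := GC.and
      (conjList ((A.gc.eqAtoms).flatMap (fun qq =>
        ((Finset.univ : Finset (Q → Fin (A.gc.maxConst + 1))).toList).flatMap (fun M1 =>
          ((Finset.univ : Finset (Q → Fin (A.gc.maxConst + 1))).toList).map (fun M2 =>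
            GC.atom (GAtom.eq (qq.1, M1) (qq.2, M2)))))))
      (conjList ((A.gc.neqAtoms).flatMap (fun qq =>
        ((Finset.univ : Finset (Q → Fin (A.gc.maxConst + 1))).toList).flatMap (fun M1 =>
          ((Finset.univ : Finset (Q → Fin (A.gc.maxConst + 1))).toList).map (fun M2 =>
            GC.atom (GAtom.neq (qq.1, M1) (qq.2, M2))))))) }

/-! ### Global pumpings -/

section Pump

variable {F Q : Type}

/-- `H_i` : positions of subruns of positive height equal to `i`. -/
def Hset (r : Run F Q) (i : ℕ) : Set (List ℕ) :=
  {p | ∃ s, RTerm.SubAt r p s ∧ 0 < RTerm.height s ∧ RTerm.height s = i}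

/-- `Ȟ_i` : positions `p.j` of subruns of positive height `< i` whose parent has
height `> i`. -/
def Hcheck (r : Run F Q) (i : ℕ) : Set (List ℕ) :=
  {p' | ∃ (p : List ℕ) (j : ℕ) (s s' : Run F Q), p' = p ++ [j] ∧
    RTerm.SubAt r p s ∧ RTerm.SubAt r p' s' ∧
    0 < RTerm.height s' ∧ RTerm.height s' < i ∧ i < RTerm.height s}

/-- `H̊_i` : positions `p.j` of subruns of height `0` (with `0 < i`) whose parent
has height `> i`. -/
def Hring (r : Run F Q) (i : ℕ) : Set (List ℕ) :=
  {p' | ∃ (p : List ℕ) (j : ℕ) (s s' : Run F Q), p' = p ++ [j] ∧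
    RTerm.SubAt r p s ∧ RTerm.SubAt r p' s' ∧
    RTerm.height s' = 0 ∧ 0 < i ∧ i < RTerm.height s}

def Dom (r : Run F Q) (i : ℕ) : Set (List ℕ) := Hset r i ∪ Hcheck r i ∪ Hring r i

/-- A pump-injection `I : (H_i ∪ Ȟ_i ∪ H̊_i) → (H_j ∪ Ȟ_j ∪ H̊_j)`. -/
structure PumpInj (E : List (Pat F × Pat F)) (r : Run F Q) (i j : ℕ)
    (I : List ℕ → List ℕ) : Prop where
  inj : Set.InjOn I (Dom r i)
  mapsH : Set.MapsTo I (Hset r i) (Hset r j)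
  mapsHc : Set.MapsTo I (Hcheck r i) (Hcheck r j)
  mapsHr : Set.MapsTo I (Hring r i) (Hring r j)
  idRing : ∀ p ∈ Hring r i, I p = p
  stPres : ∀ p ∈ Dom r i, ∀ s s', RTerm.SubAt r p s → RTerm.SubAt r (I p) s' →
    Run.state s = Run.state s'
  eqPres : ∀ p1 p2, p1 ∈ Dom r i → p2 ∈ Dom r i →
    ∀ s1 s2 s1' s2', RTerm.SubAt r p1 s1 → RTerm.SubAt r p2 s2 →
      RTerm.SubAt r (I p1) s1' → RTerm.SubAt r (I p2) s2' →
      (EqE E (Run.term s1) (Run.term s2) ↔ EqE E (Run.term s1') (Run.term s2'))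

/-- Simultaneous replacement at all positions of `D` (which are assumed to be
pairwise parallel): at a position of `D` the subtree is replaced by a tree
allowed by `ρ`, elsewhere the tree is kept. -/
inductive MultiRepl {β : Type} (D : Set (List ℕ)) (ρ : List ℕ → RTerm β → Prop) :
    List ℕ → RTerm β → RTerm β → Prop
  | here {p : List ℕ} {t t' : RTerm β} : p ∈ D → ρ p t' → MultiRepl D ρ p t t'
  | node {p : List ℕ} {f : β} {ts ts' : List (RTerm β)} :
      p ∉ D → ts.length = ts'.length →
      (∀ k u u', ts[k]? = some u → ts'[k]? = some u' →
        MultiRepl D ρ (p ++ [k]) u u') →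
      MultiRepl D ρ p (RTerm.node f ts) (RTerm.node f ts')

/-- `r'` is the global pumping on `r` with indexes `i,j` and injection `I`. -/
def IsGlobalPumpingWith (E : List (Pat F × Pat F)) (r : Run F Q) (i j : ℕ)
    (I : List ℕ → List ℕ) (r' : Run F Q) : Prop :=
  PumpInj E r i j I ∧
  MultiRepl (Dom r i) (fun p s => RTerm.SubAt r (I p) s) [] r r'

/-- The `=E`-classes of the subterms at positions of `P`. -/
def classesAt (E : List (Pat F × Pat F)) (r : Run F Q) (P : Set (List ℕ)) :
    Set (Set (RTerm F)) :=
  classesOf E {t | ∃ p ∈ P, ∃ s, RTerm.SubAt r p s ∧ Run.term s = t}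

/-- The tuple `r_{t,P}` of a class `C`, as a function on states. -/
noncomputable def tupleAt (r : Run F Q) (P : Set (List ℕ)) (C : Set (RTerm F))
    (q : Q) : ℕ :=
  {p | p ∈ P ∧ ∃ s, RTerm.SubAt r p s ∧ Run.state s = q ∧ Run.term s ∈ C}.ncard

/-- The multiset ordering `r_P ≤ r_{P'}` : an injection on classes which is
dominating on the associated tuples. -/
def MsetLE (E : List (Pat F × Pat F)) (r : Run F Q) (P P' : Set (List ℕ)) : Prop :=
  ∃ φ : Set (RTerm F) → Set (RTerm F),
    Set.InjOn φ (classesAt E r P) ∧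
    Set.MapsTo φ (classesAt E r P) (classesAt E r P') ∧
    ∀ C ∈ classesAt E r P, ∀ q, tupleAt r P C q ≤ tupleAt r P' (φ C) q

end Pump

/-! ### Multisets of tuples of naturals (for the well quasi-ordering) -/

def TupLE {n : ℕ} (x y : Fin n → ℕ) : Prop := ∀ k, x k ≤ y k

/-- Multiset ordering: an injection mapping each element to a dominating one. -/
def MLE {n : ℕ} (S T : Multiset (Fin n → ℕ)) : Prop :=
  ∃ T' : Multiset (Fin n → ℕ), T' ≤ T ∧ Multiset.Rel TupLE S T'

def msumT {n : ℕ} (S : Multiset (Fin n → ℕ)) : ℕ :=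
  (S.map (fun x => ∑ k, x k)).sum

/-! ### Hedge automata with global constraints, and currying -/

/-- A finite word automaton over the alphabet `Q` (auxiliary states are naturals). -/
structure WordAut (Q : Type) where
  stS : Finset ℕ
  init : ℕ
  final : List ℕ
  trans : List (ℕ × Q × ℕ)

inductive WAccepts {Q : Type} (W : WordAut Q) : ℕ → List Q → Prop
  | nil {s : ℕ} : s ∈ W.final → WAccepts W s []
  | cons {s : ℕ} {q : Q} {s' : ℕ} {w : List Q} :
      (s, q, s') ∈ W.trans → WAccepts W s' w → WAccepts W s (q :: w)

def WordAut.Lang {Q : Type} (W : WordAut Q) (w : List Q) : Prop := WAccepts W W.init w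

/-- Transition rule `a(L) → q` of a hedge automaton. -/
structure HRule (F Q : Type) where
  sym : F
  wa : WordAut Q
  res : Q

/-- Hedge automaton with global constraints, over unranked ordered terms. -/
structure HAG (F Q : Type) where
  stQ : Finset Q
  rules : List (HRule F Q)
  final : List Q
  gc : GC Q

abbrev HRun (F Q : Type) := RTerm (HRule F Q)

def HRun.state {F Q : Type} (r : HRun F Q) : Q := (RTerm.rootLabel r).res
def HRun.term {F Q : Type} (r : HRun F Q) : RTerm F := r.map HRule.sym

inductive IsHRun {F Q : Type} (Δ : List (HRule F Q)) : HRun F Q → Prop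
  | node {ρ : HRule F Q} {rs : List (HRun F Q)} :
      ρ ∈ Δ → ρ.wa.Lang (rs.map HRun.state) →
      (∀ r ∈ rs, IsHRun Δ r) → IsHRun Δ (RTerm.node ρ rs)

def HAG.Lang {F Q : Type} (A : HAG F Q) : Set (RTerm F) :=
  {t | ∃ r : HRun F Q, IsHRun A.rules r ∧
        satGC ([] : List (Pat F × Pat F)) HRule.res HRule.sym r A.gc ∧
        HRun.state r ∈ A.final ∧ HRun.term r = t}

/-- The ranked signature `Σ_@` : symbols of `Σ` become constants, `none` is the
binary symbol `@`. -/
def arAt {F : Type} : Option F → ℕ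
  | none => 2
  | some _ => 0

/-- The `curry` encoding of unranked terms into ranked terms over `Σ_@`. -/
inductive Curried {F : Type} : RTerm F → RTerm (Option F) → Prop
  | base {a : F} : Curried (RTerm.node a []) (RTerm.node (some a) [])
  | step {a : F} {ts : List (RTerm F)} {t : RTerm F} {u v : RTerm (Option F)} :
      Curried (RTerm.node a ts) u → Curried t v →
      Curried (RTerm.node a (ts ++ [t])) (RTerm.node none [u, v])

/-! ### Concrete signatures and languages -/

/-- The signature `{a:0, s:1, f:2}` (resp. `{a:0, g:1, f:2}`): symbol `0` has
arity 0, symbol `1` arity 1, symbol `2` arity 2. -/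
def ar3 : Fin 3 → ℕ := ![0, 1, 2]

/-- `iter1 n` is `s^n(a)` (resp. `g^n(a)`). -/
def iter1 : ℕ → RTerm (Fin 3)
  | 0 => RTerm.node 0 []
  | n + 1 => RTerm.node 1 [iter1 n]

/-- `chain [n1,…,nk] = f(s^{n1}(a), f(s^{n2}(a), …, f(s^{nk}(a), a)…))`. -/
def chain : List ℕ → RTerm (Fin 3)
  | [] => RTerm.node 0 []
  | n :: ns => RTerm.node 2 [iter1 n, chain ns]

/-- The language of chains with pairwise distinct exponents. -/
def LKey : Set (RTerm (Fin 3)) := {t | ∃ ns : List ℕ, ns.Nodup ∧ t = chain ns}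

/-- `bracket [n1,…,nk] = f(g^{n1}(a), f(…, f(g^{n_{k−1}}(a), g^{n_k}(a))…))`. -/
def bracket : List ℕ → RTerm (Fin 3)
  | [] => RTerm.node 0 []
  | [n] => iter1 n
  | n :: ns => RTerm.node 2 [iter1 n, bracket ns]

/-- Every entry has exactly one partner with the same value. -/
def ExactlyOnePartner (ns : List ℕ) : Prop :=
  ∀ i, i < ns.length → ∃! j, j < ns.length ∧ j ≠ i ∧ ns[i]? = ns[j]?

def LDup : Set (RTerm (Fin 3)) :=
  {t | ∃ ns : List ℕ, ns ≠ [] ∧ ExactlyOnePartner ns ∧ t = bracket ns}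

/-! ### Concrete, codable presentations of automata -/

abbrev RuleData := ℕ × List ℕ × List (ℕ × ℕ) × List (ℕ × ℕ) × ℕ
abbrev PatAtomData := ℕ ⊕ ℕ
abbrev FlatSideData := PatAtomData ⊕ (ℕ × List PatAtomData)
abbrev LinData := List (ℤ × ℕ) × ℤ
abbrev GAtomData := (ℕ × ℕ) ⊕ ((ℕ × ℕ) ⊕ (LinData ⊕ LinData))
abbrev GCNodeData := GAtomData ⊕ (ℕ × ℕ × ℕ)
abbrev TABGData :=
  List (ℕ × ℕ) × List RuleData × List ℕ × List (FlatSideData × FlatSideData) ×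
    List GCNodeData

def decodePatAtom : PatAtomData → Pat ℕ
  | Sum.inl v => Pat.var v
  | Sum.inr c => Pat.node c []

def decodeSide : FlatSideData → Pat ℕ
  | Sum.inl a => decodePatAtom a
  | Sum.inr (f, l) => Pat.node f (l.map decodePatAtom)

def decodeGAtom : GAtomData → GAtom ℕ
  | Sum.inl (q, q') => GAtom.eq q q'
  | Sum.inr (Sum.inl (q, q')) => GAtom.neq q q'
  | Sum.inr (Sum.inr (Sum.inl (l, a))) => GAtom.cnt l a
  | Sum.inr (Sum.inr (Sum.inr (l, a))) => GAtom.cls l a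

def decodeGC (nodes : List GCNodeData) : ℕ → ℕ → GC ℕ
  | 0, _ => GC.tt
  | fuel + 1, i =>
    match nodes[i]? with
    | some (Sum.inl a) => GC.atom (decodeGAtom a)
    | some (Sum.inr (op, l, rr)) =>
      if op = 0 then GC.tt
      else if op = 1 then GC.ff
      else if op = 2 then GC.and (decodeGC nodes fuel l) (decodeGC nodes fuel rr)
      else if op = 3 then GC.or (decodeGC nodes fuel l) (decodeGC nodes fuel rr)
      else GC.not (decodeGC nodes fuel l)
    | none => GC.tt

def decodeRule : RuleData → Rule ℕ ℕ
  | (f, args, be, bn, q) => ⟨f, args, be, bn, q⟩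

def decodeArity (sig : List (ℕ × ℕ)) : ℕ → ℕ :=
  fun f => (((sig.find? (fun p => p.1 == f)).map Prod.snd).getD 0)

def dataStates (rules : List RuleData) (final : List ℕ) : Finset ℕ :=
  (rules.flatMap (fun r => r.2.2.2.2 :: r.2.1)).toFinset ∪ final.toFinset

/-- Decoding of a full TABG with arbitrary Boolean global constraint. -/
def decodeTABG (d : TABGData) : TABG ℕ ℕ :=
  { arity := decodeArity d.1
    stQ := dataStates d.2.1 d.2.2.1
    rules := d.2.1.map decodeRule
    final := d.2.2.1
    eqs := d.2.2.2.1.map (fun e => (decodeSide e.1, decodeSide e.2))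
    gc := decodeGC d.2.2.2.2 (d.2.2.2.2).length 0 }

/-- Data for a `TAG^∧[≈]` : signature, rules (no brother constraints), final
states, and a conjunction of equational atoms `q ≈ q'`. -/
abbrev TAGCEData := List (ℕ × ℕ) × List (ℕ × List ℕ × ℕ) × List ℕ × List (ℕ × ℕ)

def decodeTAGCE (d : TAGCEData) : TABG ℕ ℕ :=
  { arity := decodeArity d.1
    stQ := (d.2.1.flatMap (fun r => r.2.2 :: r.2.1)).toFinset ∪ d.2.2.1.toFinset
    rules := d.2.1.map (fun r => ⟨r.1, r.2.1, [], [], r.2.2⟩)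
    final := d.2.2.1
    eqs := []
    gc := conjList (d.2.2.2.map (fun qq => GC.atom (GAtom.eq qq.1 qq.2))) }

/-- Data for a `TAG^∧[≈, |.|_ℤ]` : as above plus a conjunction of integer linear
inequalities. -/
abbrev TAGCZData :=
  List (ℕ × ℕ) × List (ℕ × List ℕ × ℕ) × List ℕ × List (ℕ × ℕ) × List LinData

def decodeTAGCZ (d : TAGCZData) : TABG ℕ ℕ :=
  { arity := decodeArity d.1
    stQ := (d.2.1.flatMap (fun r => r.2.2 :: r.2.1)).toFinset ∪ d.2.2.1.toFinset
    rules := d.2.1.map (fun r => ⟨r.1, r.2.1, [], [], r.2.2⟩)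
    final := d.2.2.1
    eqs := []
    gc := conjList
      (d.2.2.2.1.map (fun qq => GC.atom (GAtom.eq qq.1 qq.2)) ++
       d.2.2.2.2.map (fun la => GC.atom (GAtom.cnt la.1 la.2))) }

/-- A tree language over the ranked signature `ar` is regular if it is the
language of a plain tree automaton. -/
def IsRegular (ar : ℕ → ℕ) (L : Set (RTerm ℕ)) : Prop :=
  ∃ (n : ℕ) (B : TABG ℕ (Fin n)), B.arity = ar ∧ B.WF ∧ B.IsTA ∧ B.Lang = L

/-! ### Automata classes as predicates -/

/-- A TAGED: a TAG whose constraint is a conjunction of atoms `q ≈ q'`, `q ≉ q'`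
without reflexive disequalities. -/
def TAGEDCond {F Q : Type} (A : TABG F Q) : Prop :=
  A.IsTAG ∧ A.gc.IsConjAtoms ∧ A.gc.AtomsAre GAtom.IsEqNeq ∧ A.gc.NoReflNeq

/-- A positive conjunctive TAG with eq/neq atoms (`TAG^∧[≈,≉]`). -/
def TAGCwCond {F Q : Type} (A : TABG F Q) : Prop :=
  A.IsTAG ∧ A.gc.IsConjAtoms ∧ A.gc.AtomsAre GAtom.IsEqNeq

end TreeAut

namespace TreeAut


/-!
Every TAGED is already a `TAG^∧[≈,≉]`. The language of chains with pairwise distinct teeth is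
recognized by the `TAG^∧` that reads the roots of the teeth in a state `1` and requires `1 ≉ 1`.

No TAGED recognizes it. Run a TAGED with state set `Q` on the chain with teeth
`s^0(a), …, s^N(a)`, `N = |Q|`. Two teeth `s^i(a)` and `s^j(a)` with `i ≠ j` are read in the same
state, so replacing the subrun on the `i`-th tooth by a copy of the subrun on the `j`-th one gives
a run on a chain whose teeth are not distinct. It is still accepting: map each position of the new
run to the corresponding position of the old one, the copy going to the original `j`-th tooth.
This preserves states, and two positions of the new run carry equal subterms exactly when their
images do. Two positions with the same image carry equal terms and equal states, so they satisfy
every equality atom and can violate only a reflexive disequality `q ≉ q`.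
-/

namespace RTerm

variable {β γ : Type}

lemma map_node (g : β → γ) (b : β) (ts : List (RTerm β)) :
    (node b ts).map g = node (g b) (ts.map (map g)) := by
  rw [map]
  simp

lemma subAt_unique {t : RTerm β} {p : List ℕ} {s s' : RTerm β}
    (h : SubAt t p s) (h' : SubAt t p s') : s = s' := by
  induction h with
  | refl => cases h'; rfl
  | step hget _ ih =>
    cases h' with
    | step hget' hsub' =>
      rw [hget] at hget'
      cases hget'
      exact ih hsub'

lemma SubAt.map (g : β → γ) {t s : RTerm β} {p : List ℕ} (h : SubAt t p s) :
    SubAt (t.map g) p (s.map g) := by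
  induction h with
  | refl => exact .refl _
  | step hget _ ih =>
    rw [map_node]
    exact .step (by simp [hget]) ih

/-- The spine positions are the `1^m`, and the `m`-th tooth `teeth[m].2` hangs at `1^m 0`. -/
@[simp] def comb : List (β × RTerm β) → β → RTerm β
  | [], b => node b []
  | x :: teeth, b => node x.1 [x.2, comb teeth b]

lemma map_comb (g : β → γ) (teeth : List (β × RTerm β)) (b : β) :
    (comb teeth b).map g = comb (teeth.map (Prod.map g (map g))) (g b) := by
  induction teeth with
  | nil => simp [map_node]
  | cons x teeth ih => simp [map_node, ih]

lemma rootLabel_comb (teeth : List (β × RTerm β)) (b : β) :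
    (comb teeth b).rootLabel = (teeth.map Prod.fst).headD b := by
  cases teeth <;> rfl

lemma rootLabel_comb_drop_set {teeth : List (β × RTerm β)} {b : β} {i : ℕ} {x : β × RTerm β}
    (hi : teeth[i]? = some x) (u : RTerm β) (m : ℕ) :
    (comb ((teeth.set i (x.1, u)).drop m) b).rootLabel = (comb (teeth.drop m) b).rootLabel := by
  have hfst : (teeth.map Prod.fst).set i x.1 = teeth.map Prod.fst := by
    obtain ⟨hlt, rfl⟩ := List.getElem?_eq_some_iff.1 hi
    have := List.set_getElem_self (as := teeth.map Prod.fst) (by simpa using hlt)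
    rwa [List.getElem_map] at this
  simp only [rootLabel_comb, List.map_drop, List.map_set, hfst]

lemma rootLabel_comb_set {teeth : List (β × RTerm β)} {b : β} {i : ℕ} {x : β × RTerm β}
    (hi : teeth[i]? = some x) (u : RTerm β) :
    (comb (teeth.set i (x.1, u)) b).rootLabel = (comb teeth b).rootLabel := by
  simpa using rootLabel_comb_drop_set (b := b) hi u 0

lemma subAt_comb_iff {teeth : List (β × RTerm β)} {b : β} {p : List ℕ} {s : RTerm β} :
    SubAt (comb teeth b) p s ↔
      (∃ m ≤ teeth.length, p = List.replicate m 1 ∧ s = comb (teeth.drop m) b) ∨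
      ∃ m c x, teeth[m]? = some x ∧ p = List.replicate m 1 ++ 0 :: c ∧ SubAt x.2 c s := by
  induction teeth generalizing p with
  | nil =>
    constructor
    · rintro (_ | ⟨hget, _⟩)
      · exact .inl ⟨0, le_rfl, rfl, rfl⟩
      · simp at hget
    · rintro (⟨m, hm, rfl, rfl⟩ | ⟨m, c, x, hx, -⟩)
      · obtain rfl : m = 0 := by simpa using hm
        exact .refl _
      · simp at hx
  | cons x teeth ih =>
    constructor
    · rintro (_ | ⟨hget, hsub⟩)
      · exact .inl ⟨0, by simp, rfl, rfl⟩
      · rename_i i _ _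
        match i, hget with
        | 0, hget =>
          cases hget
          exact .inr ⟨0, _, x, rfl, rfl, hsub⟩
        | 1, hget =>
          cases hget
          rcases ih.1 hsub with ⟨m, hm, rfl, rfl⟩ | ⟨m, c, y, hy, rfl, hc⟩
          · exact .inl ⟨m + 1, by simpa using hm, rfl, rfl⟩
          · exact .inr ⟨m + 1, c, y, hy, rfl, hc⟩
    · rintro (⟨_ | m, hm, rfl, rfl⟩ | ⟨_ | m, c, y, hy, rfl, hc⟩)
      · exact .refl _
      · exact .step (i := 1) rfl (ih.2 (.inl ⟨m, by simpa using hm, rfl, rfl⟩))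
      · cases hy
        exact .step (i := 0) rfl hc
      · exact .step (i := 1) rfl (ih.2 (.inr ⟨m, c, y, hy, rfl, hc⟩))

lemma exists_comb_of_map_eq_comb (g : β → γ) {t : RTerm β} {teeth : List (γ × RTerm γ)}
    {b : γ} (h : t.map g = comb teeth b) :
    ∃ teeth' b', t = comb teeth' b' ∧ teeth'.map (Prod.map g (map g)) = teeth ∧ g b' = b := by
  induction teeth generalizing t with
  | nil =>
    obtain ⟨b', ts⟩ := t
    rcases ts with _ | ⟨_, _⟩ <;> simp [map_node] at h
    exact ⟨[], b', rfl, rfl, h⟩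
  | cons x teeth ih =>
    obtain ⟨y, ts⟩ := t
    rcases ts with _ | ⟨u, _ | ⟨v, _ | ⟨_, _⟩⟩⟩ <;> simp [map_node] at h
    obtain ⟨x₁, x₂⟩ := x
    obtain ⟨rfl, rfl, hv⟩ := h
    obtain ⟨teeth', b', rfl, rfl, rfl⟩ := ih hv
    exact ⟨(y, u) :: teeth', b', rfl, rfl, rfl⟩

def redirectTooth (i j : ℕ) (p : List ℕ) : List ℕ :=
  if List.replicate i 1 ++ [0] <+: p then List.replicate j 1 ++ 0 :: p.drop (i + 1) else p

lemma redirectTooth_spine (i j m : ℕ) :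
    redirectTooth i j (List.replicate m 1) = List.replicate m 1 := by
  rw [redirectTooth, if_neg]
  intro h
  simpa using h.subset (by simp : 0 ∈ List.replicate i 1 ++ [0])

lemma redirectTooth_tooth (i j m : ℕ) (c : List ℕ) :
    redirectTooth i j (List.replicate m 1 ++ 0 :: c) =
      List.replicate (if m = i then j else m) 1 ++ 0 :: c := by
  have key : List.replicate i 1 ++ [0] <+: List.replicate m 1 ++ 0 :: c ↔ m = i := by
    induction i generalizing m with
    | zero => cases m <;> simp [List.replicate_succ]
    | succ i ih => cases m <;> simp [List.replicate_succ, ih]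
  by_cases hm : m = i
  · subst hm
    rw [redirectTooth, if_pos (key.2 rfl), if_pos rfl,
      show List.replicate m 1 ++ 0 :: c = (List.replicate m 1 ++ [0]) ++ c by simp,
      List.drop_left' (by simp)]
  · simp [redirectTooth, key, hm]

lemma subAt_comb_set {teeth : List (β × RTerm β)} {b : β} {i j : ℕ} {x y : β × RTerm β}
    (hi : teeth[i]? = some x) (hj : teeth[j]? = some y) {p : List ℕ} {s : RTerm β}
    (h : SubAt (comb (teeth.set i (x.1, y.2)) b) p s) :
    (∃ m ≤ teeth.length,
      p = List.replicate m 1 ∧ s = comb ((teeth.set i (x.1, y.2)).drop m) b) ∨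
    ∃ m c z, teeth[m]? = some z ∧ redirectTooth i j p = List.replicate m 1 ++ 0 :: c ∧
      SubAt z.2 c s := by
  rcases subAt_comb_iff.1 h with ⟨m, hm, hp, hs⟩ | ⟨m, c, z, hz, rfl, hc⟩
  · exact .inl ⟨m, by simpa using hm, hp, hs⟩
  · right
    rw [redirectTooth_tooth]
    by_cases hm : m = i
    · subst hm
      rw [List.getElem?_set_self (List.getElem?_eq_some_iff.1 hi).1] at hz
      cases hz
      exact ⟨j, c, y, hj, by simp, hc⟩
    · rw [List.getElem?_set_ne (Ne.symm hm)] at hz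
      exact ⟨m, c, z, hz, by simp [hm], hc⟩

end RTerm

lemma _root_.List.not_nodup_set {α : Type} {l : List α} {i j : ℕ} {a : α} (hij : i ≠ j)
    (hi : i < l.length) (hj : l[j]? = some a) : ¬ (l.set i a).Nodup := by
  intro hnd
  have h₁ : (l.set i a)[i]? = some a := List.getElem?_set_self hi
  have h₂ : (l.set i a)[j]? = some a := by rw [List.getElem?_set_ne hij, hj]
  exact hij ((List.getElem?_inj (by simpa using hi) hnd).1 (h₁.trans h₂.symm))

open RTerm

lemma chain_eq_comb (ns : List ℕ) : chain ns = comb (ns.map (2, iter1 ·)) 0 := by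
  induction ns with
  | nil => rfl
  | cons n ns ih => simp [chain, ih]

lemma iter1_injective : Function.Injective iter1 := by
  intro m n h
  induction m generalizing n with
  | zero => cases n <;> simp_all [iter1]
  | succ m ih =>
    cases n with
    | zero => simp [iter1] at h
    | succ n => simp only [iter1, node.injEq, List.cons.injEq] at h; rw [ih h.2.1]

lemma chain_injective : Function.Injective chain := by
  intro xs ys h
  induction xs generalizing ys with
  | nil => cases ys <;> simp_all [chain, Fin.ext_iff]
  | cons x xs ih =>
    cases ys with
    | nil => simp [chain, Fin.ext_iff] at h
    | cons y ys =>
      simp only [chain, node.injEq, List.cons.injEq, iter1_injective.eq_iff] at h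
      rw [h.2.1, ih h.2.2.1]

lemma chain_eq_iter1_iff {xs : List ℕ} {k : ℕ} : chain xs = iter1 k ↔ xs = [] ∧ k = 0 := by
  cases xs <;> cases k <;> simp [chain, iter1, Fin.ext_iff]

lemma eq_iter1_of_subAt_iter1 {n : ℕ} {c : List ℕ} {t : RTerm (Fin 3)}
    (h : SubAt (iter1 n) c t) : ∃ k, t = iter1 k := by
  induction n generalizing c with
  | zero => cases h with
    | refl => exact ⟨0, rfl⟩
    | step hget => simp at hget
  | succ n ih => cases h with
    | refl => exact ⟨n + 1, rfl⟩
    | step hget hsub =>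
      rename_i i u _
      obtain ⟨rfl, rfl⟩ : i = 0 ∧ iter1 n = u := by cases i <;> simp_all
      exact ih hsub

lemma eqE_nil_iff {F : Type} {s t : RTerm F} : EqE ([] : List (Pat F × Pat F)) s t ↔ s = t := by
  refine ⟨fun h => ?_, fun h => h ▸ .refl⟩
  induction h with
  | refl => rfl
  | tail _ hst => obtain ⟨_, _, hmem, _⟩ := hst; simp at hmem

section Runs

variable {F Q : Type} {Δ : List (Rule F Q)} {E : List (Pat F × Pat F)}

lemma Run.term_node (ρ : Rule F Q) (rs : List (Run F Q)) :
    Run.term (node ρ rs) = node ρ.sym (rs.map Run.term) := map_node _ _ _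

lemma state_node (ρ : Rule F Q) (rs : List (Run F Q)) : Run.state (node ρ rs) = ρ.res := rfl

lemma IsRun.of_subAt {r s : Run F Q} {p : List ℕ} (hs : SubAt r p s) (h : IsRun Δ E r) :
    IsRun Δ E s := by
  induction hs with
  | refl => exact h
  | step hget _ ih => cases h with
    | node _ _ hrs => exact ih (hrs _ (List.mem_of_getElem? hget))

lemma IsRun.state_mem {A : TABG F Q} (hA : A.WF) {r : Run F Q} (h : IsRun A.rules E r) :
    r.state ∈ A.stQ := by
  cases h with
  | node hρ => exact (hA.2.1 _ hρ).2.1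

lemma IsRun.node_of_noBrother (hΔ : ∀ ρ ∈ Δ, ρ.bcEq = [] ∧ ρ.bcNeq = []) {ρ : Rule F Q}
    {rs : List (Run F Q)} (hρ : ρ ∈ Δ) (hargs : ρ.args = rs.map Run.state)
    (hrs : ∀ r ∈ rs, IsRun Δ E r) : IsRun Δ E (RTerm.node ρ rs) :=
  .node hρ hargs hrs (by simp [(hΔ ρ hρ).1]) (by simp [(hΔ ρ hρ).2])

lemma IsRun.comb_set (hΔ : ∀ ρ ∈ Δ, ρ.bcEq = [] ∧ ρ.bcNeq = [])
    {teeth : List (Rule F Q × Run F Q)} {b : Rule F Q} {i : ℕ} {x : Rule F Q × Run F Q}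
    {u : Run F Q} (h : IsRun Δ E (comb teeth b)) (hi : teeth[i]? = some x)
    (hu : IsRun Δ E u) (hst : u.state = x.2.state) :
    IsRun Δ E (comb (teeth.set i (x.1, u)) b) := by
  induction teeth generalizing i with
  | nil => simp at hi
  | cons y teeth ih =>
    obtain ⟨hmem, hargs, hrs⟩ : y.1 ∈ Δ ∧ y.1.args = _ ∧ ∀ r ∈ _, IsRun Δ E r := by
      cases h with | node h1 h2 h3 => exact ⟨h1, h2, h3⟩
    cases i with
    | zero =>
      obtain rfl : y = x := by simpa using hi
      refine .node_of_noBrother hΔ hmem ?_ ?_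
      · rw [hargs]
        simp [hst]
      · simp only [List.mem_cons, List.not_mem_nil, or_false, forall_eq_or_imp, forall_eq] at hrs ⊢
        exact ⟨hu, hrs.2⟩
    | succ i =>
      replace hi : teeth[i]? = some x := by simpa using hi
      refine .node_of_noBrother hΔ hmem ?_ ?_
      · rw [hargs]
        simp [Run.state, rootLabel_comb_set (b := b) hi u]
      · simp only [List.mem_cons, List.not_mem_nil, or_false, forall_eq_or_imp, forall_eq] at hrs ⊢
        exact ⟨hrs.1, ih hrs.2 hi⟩

lemma IsRun.comb_tooth {teeth : List (Rule F Q × Run F Q)} {b : Rule F Q} {m : ℕ}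
    {z : Rule F Q × Run F Q}
    (h : IsRun Δ E (comb teeth b)) (hz : teeth[m]? = some z) :
    z.1 ∈ Δ ∧ z.1.args.head? = some z.2.state := by
  induction teeth generalizing m with
  | nil => simp at hz
  | cons y teeth ih =>
    cases h with
    | node hρ hargs hrs =>
      cases m with
      | zero =>
        obtain rfl : y = z := by simpa using hz
        exact ⟨hρ, by simp [hargs]⟩
      | succ m => exact ih (hrs _ (by simp)) (by simpa using hz)

end Runs

section Transfer

variable {β F Q : Type} {st : β → Q} {sy : β → F}

lemma satGC_of_subAt_biUnique {r r' : RTerm β} (φ : List ℕ → List ℕ)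
    (K : RTerm F → RTerm F → Prop) (hK : Relator.BiUnique K)
    (hφ : ∀ p s', SubAt r' p s' → ∃ s, SubAt r (φ p) s ∧
      st s.rootLabel = st s'.rootLabel ∧ K (s'.map sy) (s.map sy))
    {c : GC Q} (hconj : c.IsConjAtoms) (hEN : c.AtomsAre GAtom.IsEqNeq) (hNR : c.NoReflNeq)
    (h : satGC [] st sy r c) : satGC [] st sy r' c := by
  induction c with
  | tt => trivial
  | ff => exact hconj.elim
  | and c d ihc ihd => exact ⟨ihc hconj.1 hEN.1 hNR.1 h.1, ihd hconj.2 hEN.2 hNR.2 h.2⟩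
  | or => exact hconj.elim
  | not => exact hconj.elim
  | atom a =>
    cases a with
    | cnt => exact hEN.elim
    | cls => exact hEN.elim
    | eq q q' =>
      intro p₁ p₂ s₁' s₂' hne h₁ h₂ hq₁ hq₂
      obtain ⟨s₁, hs₁, hst₁, hK₁⟩ := hφ p₁ s₁' h₁
      obtain ⟨s₂, hs₂, hst₂, hK₂⟩ := hφ p₂ s₂' h₂
      have hiff : s₁'.map sy = s₂'.map sy ↔ s₁.map sy = s₂.map sy := Relator.rel_eq hK hK₁ hK₂
      rw [eqE_nil_iff, hiff, ← eqE_nil_iff]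
      by_cases hφp : φ p₁ = φ p₂
      · rw [hφp] at hs₁
        rw [subAt_unique hs₁ hs₂]
        exact .refl
      · exact h _ _ _ _ hφp hs₁ hs₂ (hst₁.trans hq₁) (hst₂.trans hq₂)
    | neq q q' =>
      intro p₁ p₂ s₁' s₂' hne h₁ h₂ hq₁ hq₂
      obtain ⟨s₁, hs₁, hst₁, hK₁⟩ := hφ p₁ s₁' h₁
      obtain ⟨s₂, hs₂, hst₂, hK₂⟩ := hφ p₂ s₂' h₂
      have hiff : s₁'.map sy = s₂'.map sy ↔ s₁.map sy = s₂.map sy := Relator.rel_eq hK hK₁ hK₂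
      rw [eqE_nil_iff, hiff, ← eqE_nil_iff]
      by_cases hφp : φ p₁ = φ p₂
      · rw [hφp] at hs₁
        cases subAt_unique hs₁ hs₂
        exact absurd (hq₁.symm.trans (hst₁.symm.trans (hst₂.trans hq₂))) hNR
      · exact h _ _ _ _ hφp hs₁ hs₂ (hst₁.trans hq₁) (hst₂.trans hq₂)

end Transfer

/-- Matches the subterm of `chain ns'` at a spine position `1^m`, `m < ns.length`, with the
subterm of `chain ns` at the same position, and every other subterm (a subterm of a tooth, or the
final leaf `a`) with itself. -/
def SpineCorr (ns' ns : List ℕ) (t' t : RTerm (Fin 3)) : Prop :=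
  (∃ m < ns.length, t' = chain (ns'.drop m) ∧ t = chain (ns.drop m)) ∨
    (t' = t ∧ t ∈ Set.range iter1)

lemma chain_drop_inj {ns : List ℕ} {m₁ m₂ : ℕ} (h₁ : m₁ < ns.length) (h₂ : m₂ < ns.length)
    (h : chain (ns.drop m₁) = chain (ns.drop m₂)) : m₁ = m₂ := by
  have := congrArg List.length (chain_injective h)
  simp only [List.length_drop] at this
  omega

lemma chain_drop_ne_iter1 {ns : List ℕ} {m : ℕ} (hm : m < ns.length) (k : ℕ) :
    chain (ns.drop m) ≠ iter1 k := by
  simp [chain_eq_iter1_iff, hm]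

lemma SpineCorr.symm {ns' ns : List ℕ} (hlen : ns'.length = ns.length) {t' t : RTerm (Fin 3)}
    (h : SpineCorr ns' ns t' t) : SpineCorr ns ns' t t' := by
  rcases h with ⟨m, hm, rfl, rfl⟩ | ⟨rfl, ht⟩
  · exact .inl ⟨m, hlen ▸ hm, rfl, rfl⟩
  · exact .inr ⟨rfl, ht⟩

lemma spineCorr_rightUnique {ns' ns : List ℕ} (hlen : ns'.length = ns.length) :
    Relator.RightUnique (SpineCorr ns' ns) := by
  rintro t' t₁ t₂ (⟨m₁, hm₁, rfl, rfl⟩ | ⟨rfl, k₁, rfl⟩) (⟨m₂, hm₂, h₂, rfl⟩ | ⟨rfl, k₂, h₂⟩)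
  · rw [chain_drop_inj (hlen ▸ hm₁) (hlen ▸ hm₂) h₂]
  · exact absurd h₂.symm (chain_drop_ne_iter1 (hlen ▸ hm₁) k₂)
  · exact absurd h₂ (chain_drop_ne_iter1 (hlen ▸ hm₂) k₁).symm
  · rfl

lemma spineCorr_biUnique {ns' ns : List ℕ} (hlen : ns'.length = ns.length) :
    Relator.BiUnique (SpineCorr ns' ns) :=
  ⟨fun _ _ _ h₁ h₂ => spineCorr_rightUnique hlen.symm (h₁.symm hlen) (h₂.symm hlen),
    spineCorr_rightUnique hlen⟩

section CombRuns

variable {Q : Type}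

lemma term_comb_drop {teeth : List (Rule (Fin 3) Q × Run (Fin 3) Q)} {b : Rule (Fin 3) Q}
    {ns : List ℕ} (hteeth : teeth.map (Prod.map Rule.sym Run.term) = ns.map (2, iter1 ·))
    (hb : b.sym = 0) (m : ℕ) : Run.term (comb (teeth.drop m) b) = chain (ns.drop m) := by
  rw [Run.term, map_comb, List.map_drop]
  change comb ((teeth.map (Prod.map Rule.sym Run.term)).drop m) b.sym = _
  rw [hteeth, hb, chain_eq_comb, List.map_drop]

lemma exists_map_set_tooth {teeth : List (Rule (Fin 3) Q × Run (Fin 3) Q)} {ns : List ℕ}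
    (hteeth : teeth.map (Prod.map Rule.sym Run.term) = ns.map (2, iter1 ·)) {i j : ℕ}
    {x y : Rule (Fin 3) Q × Run (Fin 3) Q} (hi : teeth[i]? = some x) (hj : teeth[j]? = some y) :
    ∃ n, ns[j]? = some n ∧ (teeth.set i (x.1, y.2)).map (Prod.map Rule.sym Run.term) =
      (ns.set i n).map (2, iter1 ·) := by
  have hx := congrArg (·[i]?) hteeth
  have hy := congrArg (·[j]?) hteeth
  simp only [List.getElem?_map, hi, hj, Option.map_some] at hx hy
  obtain ⟨n, hn, hny⟩ := Option.map_eq_some_iff.1 hy.symm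
  obtain ⟨_, -, hnx⟩ := Option.map_eq_some_iff.1 hx.symm
  refine ⟨n, hn, ?_⟩
  rw [List.map_set, List.map_set, hteeth]
  congr 1
  simp only [Prod.map, Prod.mk.injEq] at hnx hny ⊢
  exact ⟨hnx.1.symm, hny.2.symm⟩

lemma satGC_comb_set {teeth : List (Rule (Fin 3) Q × Run (Fin 3) Q)} {b : Rule (Fin 3) Q}
    {ns : List ℕ} (hteeth : teeth.map (Prod.map Rule.sym Run.term) = ns.map (2, iter1 ·))
    (hb : b.sym = 0) {i j : ℕ} {x y : Rule (Fin 3) Q × Run (Fin 3) Q}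
    (hi : teeth[i]? = some x) (hj : teeth[j]? = some y)
    {c : GC Q} (hconj : c.IsConjAtoms) (hEN : c.AtomsAre GAtom.IsEqNeq)
    (hNR : c.NoReflNeq) (h : satGC [] Rule.res Rule.sym (comb teeth b) c) :
    satGC [] Rule.res Rule.sym (comb (teeth.set i (x.1, y.2)) b) c := by
  obtain ⟨n, -, hteeth'⟩ := exists_map_set_tooth hteeth hi hj
  have hlen : teeth.length = ns.length := by simpa using congrArg List.length hteeth
  refine satGC_of_subAt_biUnique (redirectTooth i j) (SpineCorr (ns.set i n) ns)
    (spineCorr_biUnique List.length_set) ?_ hconj hEN hNR h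
  intro p s' hs'
  rcases subAt_comb_set hi hj hs' with ⟨m, hm, rfl, rfl⟩ | ⟨m, c, z, hz, hp, hc⟩
  · refine ⟨comb (teeth.drop m) b, ?_, by rw [rootLabel_comb_drop_set hi], ?_⟩
    · rw [redirectTooth_spine]
      exact subAt_comb_iff.2 (.inl ⟨m, hm, rfl, rfl⟩)
    · change SpineCorr _ _ (Run.term _) (Run.term _)
      rw [term_comb_drop hteeth' hb, term_comb_drop hteeth hb]
      rcases hm.lt_or_eq with hm | rfl
      · exact .inl ⟨m, hlen ▸ hm, rfl, rfl⟩
      · rw [List.drop_eq_nil_of_le (by simp [hlen]), List.drop_eq_nil_of_le hlen.ge]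
        exact .inr ⟨rfl, 0, rfl⟩
  · refine ⟨s', hp ▸ subAt_comb_iff.2 (.inr ⟨m, c, z, hz, rfl, hc⟩), rfl, .inr ⟨rfl, ?_⟩⟩
    obtain ⟨k, hk⟩ : ∃ k, Run.term z.2 = iter1 k := by
      have hz' := congrArg (·[m]?) hteeth
      simp only [List.getElem?_map, hz, Option.map_some] at hz'
      obtain ⟨k, -, hk⟩ := Option.map_eq_some_iff.1 hz'.symm
      exact ⟨k, (congrArg Prod.snd hk).symm⟩
    have hc' : SubAt (iter1 k) c (Run.term s') := hk ▸ hc.map Rule.sym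
    obtain ⟨k', hk'⟩ := eq_iter1_of_subAt_iter1 hc'
    exact ⟨k', hk'.symm⟩

lemma TABG.IsAccRun.comb_set {A : TABG (Fin 3) Q} (hA : TAGEDCond A)
    {teeth : List (Rule (Fin 3) Q × Run (Fin 3) Q)} {b : Rule (Fin 3) Q} {ns : List ℕ}
    (hacc : A.IsAccRun (comb teeth b))
    (hteeth : teeth.map (Prod.map Rule.sym Run.term) = ns.map (2, iter1 ·))
    (hb : b.sym = 0) {i j : ℕ} {x y : Rule (Fin 3) Q × Run (Fin 3) Q}
    (hi : teeth[i]? = some x) (hj : teeth[j]? = some y) (hst : y.2.state = x.2.state) :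
    A.IsAccRun (comb (teeth.set i (x.1, y.2)) b) := by
  obtain ⟨⟨heqs, hNB⟩, hconj, hEN, hNR⟩ := hA
  obtain ⟨hrun, hgc, hfin⟩ := hacc
  have hy : IsRun A.rules A.eqs y.2 :=
    hrun.of_subAt (subAt_comb_iff.2 (.inr ⟨j, [], y, hj, rfl, .refl _⟩))
  refine ⟨hrun.comb_set hNB hi hy hst, ?_, ?_⟩
  · rw [heqs] at hgc ⊢
    exact satGC_comb_set hteeth hb hi hj hconj hEN hNR hgc
  · rwa [Run.state, rootLabel_comb_set hi]

lemma TAGEDCond.lang_ne_LKey {A : TABG (Fin 3) Q} (hA : TAGEDCond A) (hWF : A.WF) :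
    A.Lang ≠ LKey := by
  intro hL
  set N := A.stQ.card + 1
  obtain ⟨r, hacc, hterm⟩ : chain (List.range N) ∈ A.Lang := hL ▸ ⟨_, List.nodup_range, rfl⟩
  obtain ⟨teeth, b, rfl, hteeth, hb⟩ :=
    exists_comb_of_map_eq_comb Rule.sym (hterm.trans (chain_eq_comb _))
  have hlen : teeth.length = N := by simpa using congrArg List.length hteeth
  have hstQ : ∀ m : Fin teeth.length, Run.state teeth[m].2 ∈ A.stQ := fun m =>
    (hacc.1.of_subAt (subAt_comb_iff.2 (.inr ⟨m, [], _, by simp, rfl, .refl _⟩))).state_mem hWF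
  let f : Fin teeth.length → A.stQ := fun m => ⟨Run.state teeth[m].2, hstQ m⟩
  obtain ⟨i, j, hij, hf⟩ := Fintype.exists_ne_map_eq_of_card_lt f (by simp [hlen, N])
  have hi : teeth[i.1]? = some teeth[i] := by simp
  have hj : teeth[j.1]? = some teeth[j] := by simp
  have hst : Run.state teeth[j].2 = Run.state teeth[i].2 := congrArg Subtype.val hf.symm
  have hacc' := hacc.comb_set hA hteeth hb hi hj hst
  obtain ⟨n, hn, hteeth'⟩ := exists_map_set_tooth hteeth hi hj
  have hLKey : Run.term (comb (teeth.set i (teeth[i].1, teeth[j].2)) b) ∈ LKey :=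
    hL ▸ ⟨_, hacc', rfl⟩
  obtain ⟨ms, hms, hterm'⟩ := hLKey
  have hchain := term_comb_drop hteeth' hb 0
  rw [List.drop_zero, List.drop_zero, hterm'] at hchain
  rw [chain_injective hchain] at hms
  exact List.not_nodup_set (Fin.val_ne_of_ne hij) (by simpa [hlen] using i.2) hn hms

end CombRuns

def leafRule (q : Fin 3) : Rule (Fin 3) (Fin 3) := ⟨0, [], [], [], q⟩
def succRule (q : Fin 3) : Rule (Fin 3) (Fin 3) := ⟨1, [0], [], [], q⟩
def consRule : Rule (Fin 3) (Fin 3) := ⟨2, [1, 2], [], [], 2⟩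

/-- State `1` marks the teeth `s^n(a)` of a chain, state `0` their proper subterms and state `2`
the spine, so that the constraint `1 ≉ 1` says that the teeth are pairwise distinct. -/
def distinctTeethTAG : TABG (Fin 3) (Fin 3) where
  arity := ar3
  stQ := Finset.univ
  rules := [leafRule 0, succRule 0, leafRule 1, succRule 1, leafRule 2, consRule]
  final := [2]
  eqs := []
  gc := .atom (.neq 1 1)

lemma distinctTeethTAG_noBrother :
    ∀ ρ ∈ distinctTeethTAG.rules, ρ.bcEq = [] ∧ ρ.bcNeq = [] := by
  decide

def iterRun (q : Fin 3) : ℕ → Run (Fin 3) (Fin 3)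
  | 0 => .node (leafRule q) []
  | n + 1 => .node (succRule q) [iterRun 0 n]

def chainRun (ns : List ℕ) : Run (Fin 3) (Fin 3) :=
  comb (ns.map fun n => (consRule, iterRun 1 n)) (leafRule 2)

lemma state_iterRun (q : Fin 3) (n : ℕ) : Run.state (iterRun q n) = q := by
  cases n <;> rfl

lemma term_iterRun (q : Fin 3) (n : ℕ) : Run.term (iterRun q n) = iter1 n := by
  induction n generalizing q with
  | zero => simp [iterRun, Run.term_node, leafRule, iter1]
  | succ n ih => simp [iterRun, Run.term_node, succRule, iter1, ih]

lemma isRun_iterRun {q : Fin 3} (hq : q ≠ 2) (n : ℕ) :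
    IsRun distinctTeethTAG.rules [] (iterRun q n) := by
  induction n generalizing q with
  | zero =>
    refine .node_of_noBrother distinctTeethTAG_noBrother ?_ (by simp [leafRule]) (by simp)
    fin_cases q <;> simp_all [distinctTeethTAG]
  | succ n ih =>
    refine .node_of_noBrother distinctTeethTAG_noBrother ?_ (by simp [succRule, state_iterRun])
      (by simpa using ih (by decide))
    fin_cases q <;> simp_all [distinctTeethTAG]

lemma state_eq_zero_of_subAt_iterRun {q : Fin 3} {n : ℕ} {c : List ℕ}
    {s : Run (Fin 3) (Fin 3)} (h : SubAt (iterRun q n) c s) (hc : c ≠ []) : s.state = 0 := by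
  induction n generalizing q c with
  | zero => cases h with
    | refl => exact absurd rfl hc
    | step hget => simp at hget
  | succ n ih => cases h with
    | refl => exact absurd rfl hc
    | step hget hsub =>
      rename_i i u p
      obtain ⟨rfl, rfl⟩ : i = 0 ∧ iterRun 0 n = u := by cases i <;> simp_all
      by_cases hp : p = []
      · subst hp
        rw [subAt_unique hsub (.refl _), state_iterRun]
      · exact ih hsub hp

lemma term_chainRun (ns : List ℕ) : Run.term (chainRun ns) = chain ns := by
  rw [chainRun, Run.term, map_comb, chain_eq_comb, List.map_map]
  congr 1
  exact List.map_congr_left fun n _ => Prod.ext rfl (term_iterRun 1 n)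

lemma chainRun_cons (n : ℕ) (ns : List ℕ) :
    chainRun (n :: ns) = .node consRule [iterRun 1 n, chainRun ns] := rfl

lemma state_chainRun (ns : List ℕ) : Run.state (chainRun ns) = 2 := by
  cases ns <;> rfl

lemma isRun_chainRun (ns : List ℕ) : IsRun distinctTeethTAG.rules [] (chainRun ns) := by
  induction ns with
  | nil =>
    exact .node_of_noBrother distinctTeethTAG_noBrother (by simp [distinctTeethTAG]) rfl (by simp)
  | cons n ns ih =>
    rw [chainRun_cons]
    refine .node_of_noBrother distinctTeethTAG_noBrother (by simp [distinctTeethTAG])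
      (by simp [consRule, state_iterRun, state_chainRun]) ?_
    simpa using ⟨isRun_iterRun (by decide) n, ih⟩

lemma subAt_chainRun_of_state_eq_one {ns : List ℕ} {p : List ℕ} {s : Run (Fin 3) (Fin 3)}
    (h : SubAt (chainRun ns) p s) (hs : s.state = 1) :
    ∃ m n, ns[m]? = some n ∧ p = List.replicate m 1 ++ [0] ∧ s = iterRun 1 n := by
  rcases subAt_comb_iff.1 h with ⟨m, -, -, rfl⟩ | ⟨m, c, z, hz, rfl, hc⟩
  · rw [← List.map_drop, ← chainRun, state_chainRun] at hs
    exact absurd hs (by decide)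
  · simp only [List.getElem?_map, Option.map_eq_some_iff] at hz
    obtain ⟨n, hn, rfl⟩ := hz
    by_cases hc' : c = []
    · subst hc'
      exact ⟨m, n, hn, rfl, subAt_unique hc (.refl _)⟩
    · exact absurd (hs.symm.trans (state_eq_zero_of_subAt_iterRun hc hc')) (by decide)

lemma satGC_chainRun {ns : List ℕ} (hns : ns.Nodup) :
    satGC [] Rule.res Rule.sym (chainRun ns) distinctTeethTAG.gc := by
  intro p p' s s' hne hs hs' hq hq'
  obtain ⟨m, n, hn, rfl, rfl⟩ := subAt_chainRun_of_state_eq_one hs hq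
  obtain ⟨m', n', hn', rfl, rfl⟩ := subAt_chainRun_of_state_eq_one hs' hq'
  rw [eqE_nil_iff]
  change Run.term _ ≠ Run.term _
  rw [term_iterRun, term_iterRun, iter1_injective.ne_iff]
  rintro rfl
  have hm : m = m' :=
    (List.getElem?_inj (List.getElem?_eq_some_iff.1 hn).1 hns).1 (hn.trans hn'.symm)
  exact hne (by rw [hm])

lemma eq_consRule_of_mem {ρ : Rule (Fin 3) (Fin 3)} (hρ : ρ ∈ distinctTeethTAG.rules)
    (hsym : ρ.sym = 2) : ρ = consRule := by
  simp only [distinctTeethTAG, List.mem_cons, List.not_mem_nil, or_false] at hρ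
  rcases hρ with rfl | rfl | rfl | rfl | rfl | rfl <;> simp_all [leafRule, succRule]

lemma distinctTeethTAG_tooth_state {teeth : List (Rule (Fin 3) (Fin 3) × Run (Fin 3) (Fin 3))}
    {b : Rule (Fin 3) (Fin 3)} (h : IsRun distinctTeethTAG.rules [] (comb teeth b)) {m : ℕ}
    {z : Rule (Fin 3) (Fin 3) × Run (Fin 3) (Fin 3)} (hz : teeth[m]? = some z)
    (hsym : z.1.sym = 2) : Run.state z.2 = 1 := by
  obtain ⟨hρ, hargs⟩ := h.comb_tooth hz
  rw [eq_consRule_of_mem hρ hsym] at hargs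
  simpa [consRule] using hargs.symm

lemma distinctTeethTAG_run_term {r : Run (Fin 3) (Fin 3)}
    (h : IsRun distinctTeethTAG.rules [] r) :
    (r.state = 2 → r.term ∈ Set.range chain) ∧ (r.state ≠ 2 → r.term ∈ Set.range iter1) := by
  induction h with
  | @node ρ rs hρ hargs _ _ _ ih =>
    simp only [distinctTeethTAG, List.mem_cons, List.not_mem_nil, or_false] at hρ
    rcases hρ with rfl | rfl | rfl | rfl | rfl | rfl
    all_goals
      rcases rs with _ | ⟨u, _ | ⟨v, _ | ⟨w, rs⟩⟩⟩ <;>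
        simp only [leafRule, succRule, consRule, List.map_cons, List.map_nil, List.cons.injEq,
          List.nil_eq, List.cons_ne_self, List.ne_cons_self, reduceCtorEq, and_false, and_true]
          at hargs
    all_goals
      simp only [Run.term_node, state_node, leafRule, succRule, consRule, List.map_cons,
        List.map_nil, List.mem_cons, List.not_mem_nil, or_false, forall_eq, forall_eq_or_imp,
        Set.mem_range, ne_eq, Fin.reduceEq, not_false_eq_true, not_true_eq_false, forall_const,
        IsEmpty.forall_iff, implies_true, true_and, and_true] at ih ⊢
    · exact ⟨0, rfl⟩
    · obtain ⟨k, hk⟩ := ih.2 (by rw [← hargs]; decide)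
      exact ⟨k + 1, by rw [iter1, hk]⟩
    · exact ⟨0, rfl⟩
    · obtain ⟨k, hk⟩ := ih.2 (by rw [← hargs]; decide)
      exact ⟨k + 1, by rw [iter1, hk]⟩
    · exact ⟨[], rfl⟩
    · obtain ⟨k, hk⟩ := ih.1.2 (by rw [← hargs.1]; decide)
      obtain ⟨ns, hns⟩ := ih.2.1 hargs.2.symm
      exact ⟨k :: ns, by rw [chain, hk, hns]⟩

lemma distinctTeethTAG_lang : distinctTeethTAG.Lang = LKey := by
  ext t
  constructor
  · rintro ⟨r, ⟨hrun, hgc, hfin⟩, rfl⟩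
    have hst : r.state = 2 := by simpa [distinctTeethTAG] using hfin
    obtain ⟨ns, hns⟩ := (distinctTeethTAG_run_term hrun).1 hst
    obtain ⟨teeth, b, rfl, hteeth, -⟩ :=
      exists_comb_of_map_eq_comb Rule.sym (hns.symm.trans (chain_eq_comb ns))
    have tooth : ∀ {m n : ℕ}, ns[m]? = some n →
        ∃ z : Rule (Fin 3) (Fin 3) × Run (Fin 3) (Fin 3),
          teeth[m]? = some z ∧ Run.state z.2 = 1 ∧ Run.term z.2 = iter1 n := by
      intro m n hn
      have hz := congrArg (·[m]?) hteeth
      simp only [List.getElem?_map, hn, Option.map_some, Option.map_eq_some_iff] at hz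
      obtain ⟨z, hz, hzn⟩ := hz
      simp only [Prod.map, Prod.mk.injEq] at hzn
      exact ⟨z, hz, distinctTeethTAG_tooth_state hrun hz hzn.1, hzn.2⟩
    refine ⟨ns, List.nodup_iff_getElem?_ne_getElem?.2 fun m₁ m₂ hlt hm₂ heq => ?_, hns.symm⟩
    obtain ⟨n, hn⟩ : ∃ n, ns[m₂]? = some n := ⟨_, List.getElem?_eq_getElem hm₂⟩
    obtain ⟨z₁, hz₁, hs₁, ht₁⟩ := tooth (heq.trans hn)
    obtain ⟨z₂, hz₂, hs₂, ht₂⟩ := tooth hn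
    refine hgc _ _ z₁.2 z₂.2 (fun h => hlt.ne (by simpa using congrArg List.length h))
      (subAt_comb_iff.2 (.inr ⟨m₁, [], z₁, hz₁, rfl, .refl _⟩))
      (subAt_comb_iff.2 (.inr ⟨m₂, [], z₂, hz₂, rfl, .refl _⟩)) hs₁ hs₂
      (eqE_nil_iff.2 (ht₁.trans ht₂.symm))
  · rintro ⟨ns, hns, rfl⟩
    exact ⟨chainRun ns, ⟨isRun_chainRun ns, satGC_chainRun hns, by simp [distinctTeethTAG,
      state_chainRun]⟩, term_chainRun ns⟩

lemma distinctTeethTAG_WF : distinctTeethTAG.WF := by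
  refine ⟨by simp [distinctTeethTAG], ?_, by simp [distinctTeethTAG]⟩
  unfold Rule.WFr
  decide

lemma distinctTeethTAG_TAGCw : TAGCwCond distinctTeethTAG :=
  ⟨⟨rfl, distinctTeethTAG_noBrother⟩, trivial, trivial⟩

lemma TAGEDCond.tagCw {F Q : Type} {A : TABG F Q} (hA : TAGEDCond A) : TAGCwCond A :=
  ⟨hA.1, hA.2.1, hA.2.2.1⟩

/-- Every TAGED language is a `TAG^∧[≈,≉]` language, and the
inclusion is strict: over `Σ = {a:0, s:1, f:2}`, the language of terms
`f(s^{n1}(a), f(s^{n2}(a), …, f(s^{nk}(a), a)…))` with the `n_i` pairwise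
distinct is recognized by a `TAG^∧[≈,≉]` but by no TAGED. -/
theorem taged_strictly_included_in_tagcw :
    (∀ (F Q : Type) (A : TABG F Q), A.WF → TAGEDCond A →
      ∃ A' : TABG F Q, A'.WF ∧ TAGCwCond A' ∧ A'.arity = A.arity ∧
        A'.Lang = A.Lang) ∧
    (∃ (n : ℕ) (A : TABG (Fin 3) (Fin n)),
      A.arity = ar3 ∧ A.WF ∧ TAGCwCond A ∧ A.Lang = LKey) ∧
    (∀ (Q : Type) (A : TABG (Fin 3) Q),
      A.arity = ar3 → A.WF → TAGEDCond A → A.Lang ≠ LKey) := by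
  refine ⟨fun _ _ A hWF hA => ⟨A, hWF, hA.tagCw, rfl, rfl⟩, ?_, ?_⟩
  · exact ⟨3, distinctTeethTAG, rfl, distinctTeethTAG_WF, distinctTeethTAG_TAGCw,
      distinctTeethTAG_lang⟩
  · exact fun _ _ _ hWF hA => hA.lang_ne_LKey hWF

end TreeAut
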